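/- Let G = M(K_3) be the Mycielskian of the complete graph K_3, i.e., the graph with vertex set {a^u, a^v, b^u, b^v, c^u, c^v, w} and edge set {a^v b^v, a^v c^v, b^v c^v, a^u b^v, a^u c^v, b^u a^v, b^u c^v, c^u a^v, c^u b^v, a^u w, b^u w, c^u w}. Then α∘(G) = 4, χ_c(G) = 4, and χ(G) = 4. -/

import Mathlib

open SimpleGraph

/-- A list of vertices forms a cycle of `G` (single edges count as cycles of length 2):
at least two vertices, no repetitions, and consecutive vertices (cyclically) adjacent. -/
def IsCycleList {V : Type*} (G : SimpleGraph V) (l : List V) : Prop :=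
  2 ≤ l.length ∧ l.Nodup ∧
    ∀ i : Fin l.length,
      G.Adj (l.get i) (l.get ⟨((i : ℕ) + 1) % l.length, Nat.mod_lt _ i.pos⟩)

/-- A cycle of `G` is monotonic for a circular ordering `σ` of the vertices if, after a
suitable rotation, its vertices appear in increasing order of position, i.e. the vertices
`u_1, …, u_k, u_1` of the cycle appear in this cyclic order in `σ`. -/
def IsMonotonicCycle {V : Type*} [Fintype V] (G : SimpleGraph V)
    (σ : V ≃ Fin (Fintype.card V)) (l : List V) : Prop :=
  IsCycleList G l ∧ ∃ r : ℕ, ((l.rotate r).map fun x => (σ x : ℕ)).Chain' (· < ·)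

/-- The circular altitude of `G`: the largest `k` such that every circular ordering of
the vertices of `G` contains a monotonic cycle with at least `k` vertices. -/
noncomputable def circAltitude {V : Type*} [Fintype V] (G : SimpleGraph V) : ℕ :=
  sSup {k | ∀ σ : V ≃ Fin (Fintype.card V), ∃ l : List V,
    IsMonotonicCycle G σ l ∧ k ≤ l.length}

/-- A `(p,q)`-colouring of `G`: a map `c : V(G) → {1, …, p}` (encoded as `Fin p`) such
that `q ≤ |c u − c v| ≤ p − q` for every edge `uv` of `G`. -/
def IsPQColoring {V : Type*} (G : SimpleGraph V) (p q : ℕ) (c : V → Fin p) : Prop :=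
  ∀ a b : V, G.Adj a b →
    (q : ℤ) ≤ |((c a : ℕ) : ℤ) - ((c b : ℕ) : ℤ)| ∧
      |((c a : ℕ) : ℤ) - ((c b : ℕ) : ℤ)| ≤ (p : ℤ) - (q : ℤ)

/-- The circular chromatic number `χ_c(G)`: the infimum of `p / q` over all pairs of
positive integers `(p, q)` for which `G` admits a `(p,q)`-colouring. -/
noncomputable def circChromNum {V : Type*} [Fintype V] (G : SimpleGraph V) : ℝ :=
  sInf {x : ℝ | ∃ p q : ℕ, 0 < p ∧ 0 < q ∧ x = (p : ℝ) / (q : ℝ) ∧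
    ∃ c : V → Fin p, IsPQColoring G p q c}

/-- The Mycielskian `M(G)` of a graph `G`: the vertex set is
`{w} ∪ {aᵘ : a ∈ V(G)} ∪ {aᵛ : a ∈ V(G)}`, encoded with `w = none`,
`aᵘ = some (Sum.inl a)` and `aᵛ = some (Sum.inr a)`.  The vertices `aᵛ` induce a copy of
`G`, the vertex `w` is adjacent to every `aᵘ`, and for every edge `ab` of `G` the edges
`aᵘbᵛ` and `bᵘaᵛ` are present; there are no other edges. -/
def mycielskian {V : Type*} (G : SimpleGraph V) : SimpleGraph (Option (V ⊕ V)) where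
  Adj x y :=
    match x, y with
    | none, some (Sum.inl _) => True
    | some (Sum.inl _), none => True
    | some (Sum.inr a), some (Sum.inr b) => G.Adj a b
    | some (Sum.inl a), some (Sum.inr b) => G.Adj a b
    | some (Sum.inr a), some (Sum.inl b) => G.Adj a b
    | _, _ => False
  symm := by
    constructor
    rintro (_ | (a | a)) (_ | (b | b)) h <;> first | trivial | exact h.symm
  loopless := by
    constructor
    rintro (_ | (a | a)) h <;> first | trivial | exact G.loopless.irrefl a h

/-
A circular ordering is an enumeration of the vertices up to rotation, and a cycle is monotonic
exactly when one of its rotations is a subsequence of the enumeration. So `α∘(M(K₃)) ≥ 4` is a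
finite check over the `7!` enumerations, while in the enumeration `w, aᵘ, bᵘ, cᵘ, aᵛ, bᵛ, cᵛ` no
cycle with five or more vertices appears as a subsequence.

Giving `aᵘ` and `aᵛ` the colour of `a` and `w` a fourth colour properly colours `M(K₃)`. Conversely,
the twelve edge constraints of a `(p,q)`-colouring force `4q ≤ p` by linear arithmetic; since a
proper `p`-colouring is a `(p,1)`-colouring, this bounds both `χ_c` and `χ` from below by 4.
-/

namespace IsCycleList

variable {V : Type*} {G : SimpleGraph V}

theorem rotate {l : List V} (h : IsCycleList G l) (r : ℕ) : IsCycleList G (l.rotate r) := by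
  obtain ⟨hlen, hnodup, hadj⟩ := h
  have hpos : 0 < l.length := by omega
  refine ⟨by simpa using hlen, (l.rotate_perm r).nodup_iff.mpr hnodup, ?_⟩
  rintro ⟨i, hi⟩
  rw [List.get_rotate, List.get_rotate]
  convert hadj ⟨(i + r) % l.length, Nat.mod_lt _ hpos⟩ using 2
  ext
  simp only [List.length_rotate, Nat.mod_add_mod, Nat.add_right_comm]

instance [DecidableEq V] [DecidableRel G.Adj] : DecidablePred (IsCycleList G) :=
  fun l => by unfold IsCycleList; infer_instance

end IsCycleList

section CircularOrdering

variable {V : Type*} [Fintype V]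

theorem exists_ofFn_symm_eq {L : List V} (hL : L.Nodup) (hmem : ∀ v, v ∈ L) :
    ∃ σ : V ≃ Fin (Fintype.card V), List.ofFn σ.symm = L := by
  classical
  let e := hL.getEquivOfForallMemList L hmem
  have hcard : L.length = Fintype.card V := by simpa using Fintype.card_congr e
  refine ⟨e.symm.trans (finCongr hcard), List.ext_get (by simp [hcard]) fun i _ _ => ?_⟩
  simp [e]

theorem isChain_lt_map_iff_sublist (σ : V ≃ Fin (Fintype.card V)) (l : List V) :
    (l.map fun x => (σ x : ℕ)).IsChain (· < ·) ↔ l.Sublist (List.ofFn σ.symm) := by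
  have hsorted : (l.map fun x => (σ x : ℕ)).IsChain (· < ·) ↔ (l.map σ).Pairwise (· < ·) := by
    simp only [List.isChain_iff_pairwise, List.pairwise_map, Fin.lt_def]
  rw [hsorted, List.ofFn_eq_map]
  constructor
  · intro h
    have hsub : (l.map σ).Sublist (List.finRange _) :=
      List.sublist_of_subperm_of_pairwise (h.nodup.subperm fun x _ => List.mem_finRange x) h
        (List.pairwise_lt_finRange _)
    simpa using hsub.map σ.symm
  · intro h
    have hsub := h.map σ
    rw [List.map_map, σ.self_comp_symm, List.map_id] at hsub
    exact (List.pairwise_lt_finRange _).sublist hsub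

theorem exists_isMonotonicCycle_iff (G : SimpleGraph V) (σ : V ≃ Fin (Fintype.card V)) (k : ℕ) :
    (∃ l, IsMonotonicCycle G σ l ∧ k ≤ l.length) ↔
      ∃ l, l.Sublist (List.ofFn σ.symm) ∧ IsCycleList G l ∧ k ≤ l.length := by
  constructor
  · rintro ⟨l, ⟨hcyc, r, hchain⟩, hk⟩
    exact ⟨l.rotate r, (isChain_lt_map_iff_sublist σ _).mp hchain, hcyc.rotate r, by simpa using hk⟩
  · rintro ⟨l, hsub, hcyc, hk⟩
    refine ⟨l, ⟨hcyc, 0, ?_⟩, hk⟩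
    rw [List.rotate_zero]
    exact (isChain_lt_map_iff_sublist σ l).mpr hsub

theorem circAltitude_eq_of_enumerations (G : SimpleGraph V) {k : ℕ}
    (hlow : ∀ L : List V, L.Nodup → (∀ v, v ∈ L) →
      ∃ l, l.Sublist L ∧ IsCycleList G l ∧ k ≤ l.length)
    (hup : ∃ L : List V, L.Nodup ∧ (∀ v, v ∈ L) ∧
      ∀ l, l.Sublist L → IsCycleList G l → l.length ≤ k) :
    circAltitude G = k := by
  have hk : k ∈ {k | ∀ σ : V ≃ Fin (Fintype.card V), ∃ l : List V,
      IsMonotonicCycle G σ l ∧ k ≤ l.length} := fun σ =>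
    (exists_isMonotonicCycle_iff G σ k).mpr (hlow _ (List.nodup_ofFn.mpr σ.symm.injective)
      fun v => List.mem_ofFn.mpr ⟨σ v, σ.symm_apply_apply v⟩)
  have hbound : ∀ m ∈ {k | ∀ σ : V ≃ Fin (Fintype.card V), ∃ l : List V,
      IsMonotonicCycle G σ l ∧ k ≤ l.length}, m ≤ k := by
    obtain ⟨L, hL, hmem, hshort⟩ := hup
    obtain ⟨σ, rfl⟩ := exists_ofFn_symm_eq hL hmem
    intro m hm
    obtain ⟨l, hsub, hcyc, hm⟩ := (exists_isMonotonicCycle_iff G σ m).mp (hm σ)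
    exact hm.trans (hshort l hsub hcyc)
  exact le_antisymm (csSup_le ⟨k, hk⟩ hbound) (le_csSup ⟨k, hbound⟩ hk)

end CircularOrdering

section PQColoring

variable {V : Type*} {G : SimpleGraph V}

theorem IsPQColoring.adj_cases {p q : ℕ} {c : V → Fin p} (hc : IsPQColoring G p q c) {a b : V}
    (h : G.Adj a b) :
    ((q : ℤ) ≤ (c a : ℕ) - (c b : ℕ) ∧ ((c a : ℕ) : ℤ) - (c b : ℕ) ≤ p - q) ∨
      ((q : ℤ) ≤ (c b : ℕ) - (c a : ℕ) ∧ ((c b : ℕ) : ℤ) - (c a : ℕ) ≤ p - q) := by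
  have := hc a b h
  rcases abs_cases (((c a : ℕ) : ℤ) - (c b : ℕ)) with ⟨habs, _⟩ | ⟨habs, _⟩ <;>
    rw [habs] at this <;> omega

theorem SimpleGraph.Coloring.isPQColoring {p : ℕ} (C : G.Coloring (Fin p)) :
    IsPQColoring G p 1 C := by
  intro a b h
  have hne : (C a : ℕ) ≠ C b := Fin.val_ne_of_ne (C.valid h)
  have ha := (C a).isLt
  have hb := (C b).isLt
  rcases abs_cases (((C a : ℕ) : ℤ) - (C b : ℕ)) with ⟨habs, _⟩ | ⟨habs, _⟩ <;>
    rw [habs] <;> omega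

theorem circChromNum_eq_of_colorable [Fintype V] {k : ℕ} (hk : 0 < k) (hcol : G.Colorable k)
    (hlow : ∀ p q (c : V → Fin p), IsPQColoring G p q c → k * q ≤ p) :
    circChromNum G = k := by
  obtain ⟨C⟩ := hcol
  have hmem : (k : ℝ) ∈ {x : ℝ | ∃ p q : ℕ, 0 < p ∧ 0 < q ∧ x = (p : ℝ) / (q : ℝ) ∧
      ∃ c : V → Fin p, IsPQColoring G p q c} :=
    ⟨k, 1, hk, one_pos, by simp, C, C.isPQColoring⟩
  have hbound : ∀ x ∈ {x : ℝ | ∃ p q : ℕ, 0 < p ∧ 0 < q ∧ x = (p : ℝ) / (q : ℝ) ∧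
      ∃ c : V → Fin p, IsPQColoring G p q c}, (k : ℝ) ≤ x := by
    rintro x ⟨p, q, -, hq, rfl, c, hc⟩
    rw [le_div_iff₀ (by exact_mod_cast hq)]
    exact_mod_cast hlow p q c hc
  exact le_antisymm (csInf_le ⟨k, hbound⟩ hmem) (le_csInf ⟨k, hmem⟩ hbound)

theorem chromaticNumber_eq_of_colorable {k : ℕ} (hcol : G.Colorable k)
    (hlow : ∀ p q (c : V → Fin p), IsPQColoring G p q c → k * q ≤ p) :
    G.chromaticNumber = k := by
  refine le_antisymm hcol.chromaticNumber_le (le_chromaticNumber_iff_colorable.mpr ?_)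
  rintro m ⟨C⟩
  exact_mod_cast (mul_one k ▸ hlow m 1 C C.isPQColoring)

end PQColoring

section Mycielskian

variable {V : Type*} (G : SimpleGraph V)

instance mycielskian.decidableAdj [DecidableRel G.Adj] : DecidableRel (mycielskian G).Adj
  | none, none | none, some (.inr _) | some (.inr _), none | some (.inl _), some (.inl _) =>
    isFalse id
  | none, some (.inl _) | some (.inl _), none => isTrue trivial
  | some (.inl a), some (.inr b) | some (.inr a), some (.inl b) | some (.inr a), some (.inr b) =>
    inferInstanceAs (Decidable (G.Adj a b))

def SimpleGraph.Coloring.mycielskian {k : ℕ} (C : G.Coloring (Fin k)) :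
    (mycielskian G).Coloring (Fin (k + 1)) :=
  Coloring.mk (fun | none => Fin.last k | some (.inl a) | some (.inr a) => (C a).castSucc) <| by
    rintro (_ | a | a) (_ | b | b) h <;>
      first
      | exact (h : False).elim
      | simpa only [ne_eq, Fin.castSucc_inj] using C.valid h
      | simp [Fin.castSucc_ne_last, (Fin.castSucc_ne_last _).symm]

theorem SimpleGraph.Colorable.mycielskian {k : ℕ} (h : G.Colorable k) :
    (mycielskian G).Colorable (k + 1) :=
  let ⟨C⟩ := h; ⟨C.mycielskian⟩

end Mycielskian

section MycielskianK3

def mycielskianK3Vertices : List (Option (Fin 3 ⊕ Fin 3)) :=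
  [none, some (.inl 0), some (.inl 1), some (.inl 2), some (.inr 0), some (.inr 1), some (.inr 2)]

theorem mycielskianK3Vertices_nodup : mycielskianK3Vertices.Nodup := by decide

theorem mem_mycielskianK3Vertices (v : Option (Fin 3 ⊕ Fin 3)) : v ∈ mycielskianK3Vertices := by
  rcases v with _ | a | a <;> try fin_cases a
  all_goals simp [mycielskianK3Vertices]

set_option maxRecDepth 100000 in
theorem mycielskian_K3_permutations'_exists_cycle :
    ∀ L ∈ mycielskianK3Vertices.permutations', ∃ l ∈ L.sublistsLen 4,
      IsCycleList (mycielskian (completeGraph (Fin 3))) l := by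
  decide +kernel

theorem mycielskian_K3_exists_long_cycle {L : List (Option (Fin 3 ⊕ Fin 3))} (hL : L.Nodup)
    (hmem : ∀ v, v ∈ L) :
    ∃ l, l.Sublist L ∧ IsCycleList (mycielskian (completeGraph (Fin 3))) l ∧ 4 ≤ l.length := by
  have hperm : L ∈ mycielskianK3Vertices.permutations' :=
    List.mem_permutations'.mpr <| (List.perm_ext_iff_of_nodup hL mycielskianK3Vertices_nodup).mpr
      fun v => by simp only [hmem, mem_mycielskianK3Vertices]
  obtain ⟨l, hl, hcyc⟩ := mycielskian_K3_permutations'_exists_cycle L hperm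
  obtain ⟨hsub, hlen⟩ := List.mem_sublistsLen.mp hl
  exact ⟨l, hsub, hcyc, hlen.ge⟩

set_option maxRecDepth 100000 in
theorem mycielskian_K3_cycle_length_le {l : List (Option (Fin 3 ⊕ Fin 3))}
    (hsub : l.Sublist mycielskianK3Vertices)
    (hcyc : IsCycleList (mycielskian (completeGraph (Fin 3))) l) : l.length ≤ 4 := by
  have hcheck : ∀ l ∈ mycielskianK3Vertices.sublists,
      IsCycleList (mycielskian (completeGraph (Fin 3))) l → l.length ≤ 4 := by
    decide +kernel
  exact hcheck l (List.mem_sublists.mpr hsub) hcyc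

theorem mycielskian_K3_four_mul_le {p q : ℕ} {c : Option (Fin 3 ⊕ Fin 3) → Fin p}
    (hc : IsPQColoring (mycielskian (completeGraph (Fin 3))) p q c) : 4 * q ≤ p := by
  have := hc.adj_cases (a := none) (b := some (.inl 0)) trivial
  have := hc.adj_cases (a := none) (b := some (.inl 1)) trivial
  have := hc.adj_cases (a := none) (b := some (.inl 2)) trivial
  have := hc.adj_cases (a := some (.inl 0)) (b := some (.inr 1)) (by decide)
  have := hc.adj_cases (a := some (.inl 0)) (b := some (.inr 2)) (by decide)
  have := hc.adj_cases (a := some (.inl 1)) (b := some (.inr 0)) (by decide)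
  have := hc.adj_cases (a := some (.inl 1)) (b := some (.inr 2)) (by decide)
  have := hc.adj_cases (a := some (.inl 2)) (b := some (.inr 0)) (by decide)
  have := hc.adj_cases (a := some (.inl 2)) (b := some (.inr 1)) (by decide)
  have := hc.adj_cases (a := some (.inr 0)) (b := some (.inr 1)) (by decide)
  have := hc.adj_cases (a := some (.inr 0)) (b := some (.inr 2)) (by decide)
  have := hc.adj_cases (a := some (.inr 1)) (b := some (.inr 2)) (by decide)
  have := (c none).isLt
  have := (c (some (.inl 0))).isLt
  have := (c (some (.inl 1))).isLt
  have := (c (some (.inl 2))).isLt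
  have := (c (some (.inr 0))).isLt
  have := (c (some (.inr 1))).isLt
  have := (c (some (.inr 2))).isLt
  omega

end MycielskianK3

/-- Let `G = M(K₃)` be the Mycielskian of the complete graph `K₃` (a vertex `w`, vertices
`aᵘ, bᵘ, cᵘ` and a triangle `aᵛ, bᵛ, cᵛ`, with the edges described in the construction).
Then `α∘(G) = 4`, `χ_c(G) = 4` and `χ(G) = 4`. -/
theorem mycielskian_K3 :
    circAltitude (mycielskian (completeGraph (Fin 3))) = 4 ∧
    circChromNum (mycielskian (completeGraph (Fin 3))) = 4 ∧
    (mycielskian (completeGraph (Fin 3))).chromaticNumber = (4 : ℕ∞) := by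
  have hcol : (mycielskian (completeGraph (Fin 3))).Colorable (3 + 1) :=
    (completeGraph (Fin 3)).selfColoring.colorable.mycielskian
  have hlow := fun p q c => @mycielskian_K3_four_mul_le p q c
  exact ⟨circAltitude_eq_of_enumerations _ (fun _ => mycielskian_K3_exists_long_cycle)
      ⟨mycielskianK3Vertices, mycielskianK3Vertices_nodup, mem_mycielskianK3Vertices,
        fun _ => mycielskian_K3_cycle_length_le⟩,
    circChromNum_eq_of_colorable four_pos hcol hlow, chromaticNumber_eq_of_colorable hcol hlow⟩
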